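/- arXiv:2405.02148 — 3 statements merged into one kernel-verified Lean document; each statement's English description precedes it below -/
import Mathlib

section
/- Novelty is not necessary for transformativeness: for every nonempty experience σ : List A there exist a scientist M (for instance the ever-changing scientist M σ = σ.length taking values in ℕ) and an artefact a such that a is NOT novel in the situation (M, σ) (i.e., a ∈ content σ) yet a is transformative in (M, σ) (i.e., M σ ≠ M (σ ++ [a])). -/
/-- The inspiring set (content) of an experience: the set of artefacts occurring in it. -/
def content {A : Type*} (σ : List A) : Set A := {a | a ∈ σ}

theorem content_nonempty {A : Type*} {σ : List A} (hσ : σ ≠ []) : (content σ).Nonempty :=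
  List.exists_mem_of_ne_nil σ hσ

theorem length_ne_length_append_singleton {A : Type*} (σ : List A) (a : A) :
    σ.length ≠ (σ ++ [a]).length := by
  simp

/-- Novelty is not necessary for transformativeness: for every nonempty experience
there are a scientist (e.g. the ever-changing one `M σ = σ.length`) and an artefact
that is not novel in the situation yet is transformative. -/
theorem novelty_not_necessary_for_transformativeness
    {A : Type} (σ : List A) (hσ : σ ≠ []) :
    ∃ (M : List A → ℕ) (a : A),
      a ∈ content σ ∧ M σ ≠ M (σ ++ [a]) := by
  obtain ⟨a, ha⟩ := content_nonempty hσ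
  exact ⟨List.length, a, ha, length_ne_length_append_singleton σ a⟩
end

section
/- If a scientist converges on a text with infinite content, then some novel artefact fails to be transformative: let T : ℕ → Option A be a text whose content is an infinite set, and suppose the scientist M : List (Option A) → P converges on T (there exists p with M (T[n]) = p for all but finitely many n). Then there exist an index n ∈ ℕ and an artefact a : A with T n = some a, a not in the content of the prefix T[n] (so a is novel in the situation (M, T[n])), and M (T[n]) = M (T[n+1]) (so the entry T n is not transformative in that situation). -/
/-- The prefix of length `n` of a text `T`. -/
def prefixOf {A : Type*} (T : ℕ → A) (n : ℕ) : List A := (List.range n).map T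

/-- The content of a text of optional artefacts: the artefacts appearing in it. -/
def contentT {A : Type*} (T : ℕ → Option A) : Set A := {a | ∃ k, T k = some a}

/-- The content of a finite experience of optional artefacts. -/
def contentL {A : Type*} (σ : List (Option A)) : Set A := {a | some a ∈ σ}

lemma contentL_finite {A : Type*} (σ : List (Option A)) : (contentL σ).Finite := by
  have : contentL σ ⊆ (some : A → Option A) ⁻¹' {x | x ∈ σ} := fun a ha => ha
  exact (Set.Finite.preimage (Option.some_injective A).injOn
    (σ.finite_toSet)).subset this

lemma mem_contentL_prefix {A : Type*} (T : ℕ → Option A) (n : ℕ) (a : A) :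
    a ∈ contentL (prefixOf T n) ↔ ∃ k < n, T k = some a := by
  simp [contentL, prefixOf, eq_comm]

/-- If a scientist converges on a text with infinite content, then some novel
artefact fails to be transformative: there is an index `n` carrying an artefact `a`
that is novel relative to the prefix `T[n]` yet does not change the hypothesis. -/
theorem converging_on_infinite_text_has_novel_non_transformative
    {A P : Type} (T : ℕ → Option A) (hT : (contentT T).Infinite)
    (M : List (Option A) → P)
    (hM : ∃ p : P, ∀ᶠ n in Filter.cofinite, M (prefixOf T n) = p) :
    ∃ (n : ℕ) (a : A), T n = some a ∧ a ∉ contentL (prefixOf T n) ∧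
      M (prefixOf T n) = M (prefixOf T (n + 1)) := by
  obtain ⟨p, hp⟩ := hM
  rw [Filter.eventually_cofinite] at hp
  obtain ⟨N, hN⟩ : ∃ N, ∀ n ≥ N, M (prefixOf T n) = p := by
    obtain ⟨N, hN⟩ := (Set.Finite.bddAbove hp)
    refine ⟨N + 1, fun n hn => ?_⟩
    by_contra h
    exact absurd (hN h) (by omega)
  -- find artefact not in the prefix of length N
  obtain ⟨a, haT, hanot⟩ : ∃ a ∈ contentT T, a ∉ contentL (prefixOf T N) := by
    by_contra h
    push_neg at h
    exact hT ((contentL_finite (prefixOf T N)).subset h)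
  classical
  -- take the least such k
  have hex : ∃ k, T k = some a := haT
  set m := Nat.find hex with hmdef
  have hm := Nat.find_spec hex
  have hmin : ∀ j < m, T j ≠ some a := fun j hj => Nat.find_min hex hj
  have hmN : N ≤ m := by
    by_contra h
    push_neg at h
    exact hanot ((mem_contentL_prefix T N a).2 ⟨m, h, hm⟩)
  refine ⟨m, a, hm, ?_, ?_⟩
  · intro hmem
    obtain ⟨j, hj, hja⟩ := (mem_contentL_prefix T m a).1 hmem
    exact hmin j hj hja
  · rw [hN m hmN, hN (m + 1) (by omega)]
end

section
/- Condition 2 does not imply Condition 1: if the artefact type A has at least two distinct elements, then there exists a scientist M : List A → P (for instance one that outputs the last novel artefact seen) satisfying Condition 2 — for all experiences σ and artefacts a, M σ ≠ M (σ ++ [a]) implies a ∉ content σ — but NOT satisfying Condition 1, i.e., M is not set-driven: there exist experiences σ, τ with content σ = content τ but M σ ≠ M τ. -/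
theorem content_eq_of_perm {A : Type*} {σ τ : List A} (h : σ.Perm τ) :
    content σ = content τ :=
  Set.ext fun _ => h.mem_iff

section NoveltyRecord

variable {A : Type*} [DecidableEq A]

/-- The distinct artefacts of an experience, most recent novelty first (so its head is the last
novel artefact seen): a repeated artefact leaves it unchanged, but it records an order that the
content forgets. -/
def noveltyRecord (σ : List A) : List A := σ.reverse.dedup

theorem noveltyRecord_append_of_mem {σ : List A} {x : A} (hx : x ∈ σ) :
    noveltyRecord (σ ++ [x]) = noveltyRecord σ := by
  rw [noveltyRecord, List.reverse_append, List.reverse_singleton, List.singleton_append,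
    List.dedup_cons_of_mem (List.mem_reverse.mpr hx), noveltyRecord]

theorem not_mem_content_of_noveltyRecord_append_ne {σ : List A} {x : A}
    (h : noveltyRecord σ ≠ noveltyRecord (σ ++ [x])) : x ∉ content σ :=
  fun hx => h (noveltyRecord_append_of_mem hx).symm

theorem noveltyRecord_pair {a b : A} (hab : a ≠ b) : noveltyRecord [a, b] = [b, a] := by
  simp [noveltyRecord, List.dedup_cons_of_notMem, hab.symm]

end NoveltyRecord

/-- Condition 2 does not imply Condition 1: if the artefact type has two distinct
elements, there is a scientist for which every transformative artefact is novel
(Condition 2) but which is not set-driven (not Condition 1). -/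
theorem condition2_not_implies_condition1
    {A : Type} (a b : A) (hab : a ≠ b) :
    ∃ (P : Type) (M : List A → P),
      (∀ (σ : List A) (x : A), M σ ≠ M (σ ++ [x]) → x ∉ content σ) ∧
      ∃ σ τ : List A, content σ = content τ ∧ M σ ≠ M τ := by
  classical
  refine ⟨List A, noveltyRecord, fun _ _ => not_mem_content_of_noveltyRecord_append_ne,
    [a, b], [b, a], content_eq_of_perm (List.Perm.swap b a []), ?_⟩
  rw [noveltyRecord_pair hab, noveltyRecord_pair hab.symm]
  simp [hab.symm]
end
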